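/- arXiv:1303.3631 — 2 statements merged into one kernel-verified Lean document; each statement's English description precedes it below -/
import Mathlib

section
/- Let (K, |·|) be a field with a non-archimedean absolute value. The function d on ℙ^n(K) defined by d([x₀:⋯:x_n], [y₀:⋯:y_n]) = (max_{i,j} |x_i y_j − x_j y_i|) / (max_i |x_i| · max_j |y_j|) satisfies the ultrametric triangle inequality: d(P, R) ≤ max(d(P, Q), d(Q, R)) for all P, Q, R ∈ ℙ^n(K). -/
/-!
Write `|x| = maxᵢ |xᵢ|` and `|x ∧ y| = max_{i,j} |xᵢyⱼ - xⱼyᵢ|`, so that `d(x, y) = |x ∧ y| / (|x| |y|)`.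
Choosing `k` with `|y_k| = |y|`, the identity
`y_k (xᵢzⱼ - xⱼzᵢ) = zⱼ (xᵢy_k - x_kyᵢ) - zᵢ (xⱼy_k - x_kyⱼ) + x_k (yᵢzⱼ - yⱼzᵢ)`
and the ultrametric inequality give `|x ∧ z| |y| ≤ max (|z| |x ∧ y|, |x| |y ∧ z|)`;
dividing by `|x| |y| |z|` is the claim.
-/

/-- The chordal distance function on `ℙⁿ(K)`, computed on homogeneous coordinates:
`d([x],[y]) = max_{i,j} |xᵢyⱼ - xⱼyᵢ| / (maxᵢ |xᵢ| · maxⱼ |yⱼ|)`. -/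
noncomputable def chordalDist {K : Type*} [Field K] (v : AbsoluteValue K ℝ) (n : ℕ)
    (x y : Fin (n + 1) → K) : ℝ :=
  (Finset.univ.sup' Finset.univ_nonempty
      (fun ij : Fin (n + 1) × Fin (n + 1) => v (x ij.1 * y ij.2 - x ij.2 * y ij.1))) /
    ((Finset.univ.sup' Finset.univ_nonempty fun i => v (x i)) *
      (Finset.univ.sup' Finset.univ_nonempty fun j => v (y j)))

open Finset

lemma div_mul_le_max_div_of_mul_le_max {a b c s p q : ℝ} (ha : 0 ≤ a) (hb : 0 < b) (hc : 0 ≤ c)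
    (h : s * b ≤ max (c * p) (a * q)) :
    s / (a * c) ≤ max (p / (a * b)) (q / (b * c)) := by
  rcases ha.eq_or_lt with rfl | ha
  · simp
  rcases hc.eq_or_lt with rfl | hc
  · simp
  calc s / (a * c) = s * b / (a * b * c) := by field_simp
    _ ≤ max (c * p) (a * q) / (a * b * c) := by gcongr
    _ = max (p / (a * b)) (q / (b * c)) := by
      rw [← max_div_div_right (by positivity)]
      congr 1 <;> field_simp

namespace AbsoluteValue

variable {K ι : Type*} [CommRing K] [Fintype ι] [Nonempty ι] (v : AbsoluteValue K ℝ)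

noncomputable def maxAbv (x : ι → K) : ℝ :=
  univ.sup' univ_nonempty fun i => v (x i)

noncomputable def maxAbvWedge (x y : ι → K) : ℝ :=
  univ.sup' univ_nonempty fun ij : ι × ι => v (x ij.1 * y ij.2 - x ij.2 * y ij.1)

variable {v}

lemma abv_le_maxAbv (x : ι → K) (i : ι) : v (x i) ≤ maxAbv v x :=
  le_sup' (fun i => v (x i)) (mem_univ i)

lemma maxAbv_nonneg (x : ι → K) : 0 ≤ maxAbv v x :=
  (v.nonneg _).trans (abv_le_maxAbv x (Classical.arbitrary ι))

lemma maxAbv_pos {x : ι → K} (hx : x ≠ 0) : 0 < maxAbv v x := by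
  obtain ⟨i, hi⟩ := Function.ne_iff.mp hx
  exact (v.pos hi).trans_le (abv_le_maxAbv x i)

lemma abv_wedge_le_maxAbvWedge (x y : ι → K) (i j : ι) :
    v (x i * y j - x j * y i) ≤ maxAbvWedge v x y :=
  le_sup' (fun ij : ι × ι => v (x ij.1 * y ij.2 - x ij.2 * y ij.1)) (mem_univ (i, j))

lemma abv_sub_le_max (hna : IsNonarchimedean v) (a b : K) : v (a - b) ≤ max (v a) (v b) := by
  simpa [sub_eq_add_neg] using hna a (-b)

lemma abv_mul_wedge_le (hna : IsNonarchimedean v) (x y z : ι → K) (i j k : ι) :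
    v (y k * (x i * z j - x j * z i)) ≤
      max (maxAbv v z * maxAbvWedge v x y) (maxAbv v x * maxAbvWedge v y z) := by
  have hmul {a b : K} {A B : ℝ} (ha : v a ≤ A) (hb : v b ≤ B) : v (a * b) ≤ A * B := by
    rw [map_mul]
    exact mul_le_mul ha hb (v.nonneg _) ((v.nonneg _).trans ha)
  have plucker : y k * (x i * z j - x j * z i) =
      (z j * (x i * y k - x k * y i) - z i * (x j * y k - x k * y j)) +
        x k * (y i * z j - y j * z i) := by ring
  rw [plucker]
  refine (hna _ _).trans (max_le_max ((abv_sub_le_max hna _ _).trans (max_le ?_ ?_)) ?_)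
  · exact hmul (abv_le_maxAbv z j) (abv_wedge_le_maxAbvWedge x y i k)
  · exact hmul (abv_le_maxAbv z i) (abv_wedge_le_maxAbvWedge x y j k)
  · exact hmul (abv_le_maxAbv x k) (abv_wedge_le_maxAbvWedge y z i j)

lemma maxAbvWedge_mul_maxAbv_le (hna : IsNonarchimedean v) (x y z : ι → K) :
    maxAbvWedge v x z * maxAbv v y ≤
      max (maxAbv v z * maxAbvWedge v x y) (maxAbv v x * maxAbvWedge v y z) := by
  obtain ⟨⟨i, j⟩, -, hij⟩ := exists_mem_eq_sup' univ_nonempty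
    fun ij : ι × ι => v (x ij.1 * z ij.2 - x ij.2 * z ij.1)
  obtain ⟨k, -, hk⟩ := exists_mem_eq_sup' univ_nonempty fun i => v (y i)
  rw [maxAbvWedge, maxAbv, hij, hk, mul_comm, ← map_mul]
  exact abv_mul_wedge_le hna x y z i j k

end AbsoluteValue

open AbsoluteValue

lemma chordalDist_eq {K : Type*} [Field K] (v : AbsoluteValue K ℝ) (n : ℕ)
    (x y : Fin (n + 1) → K) :
    chordalDist v n x y = maxAbvWedge v x y / (maxAbv v x * maxAbv v y) :=
  rfl

theorem stmt_5_general {K : Type*} [Field K] (v : AbsoluteValue K ℝ)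
    (hna : ∀ x y : K, v (x + y) ≤ max (v x) (v y)) (n : ℕ)
    (x y z : Fin (n + 1) → K) (hy : y ≠ 0) :
    chordalDist v n x z ≤ max (chordalDist v n x y) (chordalDist v n y z) := by
  simp only [chordalDist_eq]
  exact div_mul_le_max_div_of_mul_le_max (maxAbv_nonneg x) (maxAbv_pos hy) (maxAbv_nonneg z)
    (maxAbvWedge_mul_maxAbv_le hna x y z)

/-- For a non-archimedean absolute value, the chordal distance on `ℙⁿ(K)` satisfies the
ultrametric triangle inequality. -/
theorem stmt_5 {K : Type*} [Field K] (v : AbsoluteValue K ℝ)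
    (hna : ∀ x y : K, v (x + y) ≤ max (v x) (v y)) (n : ℕ)
    (x y z : Fin (n + 1) → K) (hx : x ≠ 0) (hy : y ≠ 0) (hz : z ≠ 0) :
    chordalDist v n x z ≤ max (chordalDist v n x y) (chordalDist v n y z) :=
  stmt_5_general v hna n x y z hy
end

section
/- Let a ∈ ℚ̄ be an algebraic number that is nonzero and not a root of unity. Then there exists a place v of the number field ℚ(a) (archimedean or non-archimedean) such that |a|_v > 1. -/
/-!
If `|a|_v ≤ 1` at every finite place, then `a` is an algebraic integer; if moreover
`|a|_w ≤ 1` at every infinite place, all conjugates of `a` lie in the closed unit disk, and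
Kronecker's theorem makes the nonzero `a` a root of unity.
-/

open NumberField IsDedekindDomain

theorem NumberField.InfinitePlace.exists_pow_eq_one_of_forall_le_one {K : Type*} [Field K]
    [NumberField K] {x : K} (hx₀ : x ≠ 0) (hxi : IsIntegral ℤ x)
    (hx : ∀ w : InfinitePlace K, w x ≤ 1) : ∃ n : ℕ, 0 < n ∧ x ^ n = 1 := by
  obtain ⟨n, hn, hxn⟩ := Embeddings.pow_eq_one_of_norm_le_one K ℂ hx₀ hxi fun φ ↦ by
    simpa only [InfinitePlace.apply] using hx (InfinitePlace.mk φ)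
  exact ⟨n, hn, hxn⟩

theorem stmt_9_general {K : Type*} [Field K] [NumberField K] (a : K)
    (ha0 : a ≠ 0) (hroot : ∀ n : ℕ, 1 ≤ n → a ^ n ≠ 1) :
    (∃ w : NumberField.InfinitePlace K, 1 < w a) ∨
    (∃ v : IsDedekindDomain.HeightOneSpectrum (NumberField.RingOfIntegers K),
      1 < v.valuation K a) := by
  by_contra! h
  obtain ⟨hinf, hfin⟩ := h
  obtain ⟨c, rfl⟩ := HeightOneSpectrum.mem_integers_of_valuation_le_one K _ hfin
  obtain ⟨n, hn, hpow⟩ := InfinitePlace.exists_pow_eq_one_of_forall_le_one ha0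
    (RingOfIntegers.isIntegral_coe c) hinf
  exact hroot n hn hpow

/-- Kronecker-type statement: if `a` is a nonzero algebraic number which is not a root of
unity, then some place (archimedean or non-archimedean) of the number field `ℚ(a)` has
`|a|_v > 1`.  The number field `ℚ(a)` is represented as a number field `K` generated over
`ℚ` by `a`; its non-archimedean places are the height-one primes `v` of its ring of
integers, with `|a|_v > 1` expressed as `1 < v.valuation a`. -/
theorem stmt_9 {K : Type*} [Field K] [NumberField K] (a : K)
    (hgen : IntermediateField.adjoin ℚ {a} = ⊤)
    (ha0 : a ≠ 0) (hroot : ∀ n : ℕ, 1 ≤ n → a ^ n ≠ 1) :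
    (∃ w : NumberField.InfinitePlace K, 1 < w a) ∨
    (∃ v : IsDedekindDomain.HeightOneSpectrum (NumberField.RingOfIntegers K),
      1 < v.valuation K a) :=
  stmt_9_general a ha0 hroot
end
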